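/- Let z > 0, C > 0, ω > 0 and e = (e₁, e₂, e₃) ∈ ℝ³. Assume ω² C²/(2z) < 1 and |2 C e₁/√z + 2 C² ω e₂/z + C²(e₁² + e₂²)/z²| < ω² C²/2. Then the point y = (z + C e₁/√z, (C e₂ + C ω z)/√z, C e₃/√z) satisfies d_r(y) ≥ z + ω² C²/6. -/

import Mathlib

noncomputable def vec3 (a b c : ℝ) : EuclideanSpace ℝ (Fin 3) := WithLp.toLp 2 ![a, b, c]

noncomputable def dr (x : EuclideanSpace ℝ (Fin 3)) : ℝ :=
  Real.sqrt (x 0 ^ 2 + x 1 ^ 2)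

/-! The particle moves with the rotating medium up to the error `e`, so its squared radius is
`z² + ω²C²z` plus `z` times the error term; that error eats at most half of the gain `ω²C²z`,
and the remaining `ω²C²z / 2` dominates `(z + ω²C²/6)² - z²` as soon as `ω²C² ≤ 6z`. -/

theorem dr_vec3 (a b c : ℝ) : dr (vec3 a b c) = Real.sqrt (a ^ 2 + b ^ 2) := rfl

theorem radial_sq_eq {z : ℝ} (hz : 0 < z) (C ω e₁ e₂ : ℝ) :
    (z + C * e₁ / Real.sqrt z) ^ 2 + ((C * e₂ + C * ω * z) / Real.sqrt z) ^ 2 =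
      z ^ 2 + ω ^ 2 * C ^ 2 * z + z * (2 * C * e₁ / Real.sqrt z + 2 * C ^ 2 * ω * e₂ / z +
        C ^ 2 * (e₁ ^ 2 + e₂ ^ 2) / z ^ 2) := by
  have hs : 0 < Real.sqrt z := Real.sqrt_pos.mpr hz
  have hsq : Real.sqrt z ^ 2 = z := Real.sq_sqrt hz.le
  generalize Real.sqrt z = s at hs hsq ⊢
  subst hsq
  field_simp
  ring

theorem add_div_six_le_sqrt {z k R : ℝ} (hk : 0 ≤ k) (hkz : k ≤ 6 * z)
    (hR : z ^ 2 + k * z / 2 ≤ R) : z + k / 6 ≤ Real.sqrt R := by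
  apply Real.le_sqrt_of_sq_le
  nlinarith [mul_nonneg hk (sub_nonneg.mpr hkz)]

theorem stmt_5_general (z C ω e₁ e₂ e₃ : ℝ) (hz : 0 < z)
    (h1 : ω ^ 2 * C ^ 2 / (2 * z) < 1)
    (h2 : |2 * C * e₁ / Real.sqrt z + 2 * C ^ 2 * ω * e₂ / z +
      C ^ 2 * (e₁ ^ 2 + e₂ ^ 2) / z ^ 2| < ω ^ 2 * C ^ 2 / 2) :
    dr (vec3 (z + C * e₁ / Real.sqrt z) ((C * e₂ + C * ω * z) / Real.sqrt z)
        (C * e₃ / Real.sqrt z)) ≥ z + ω ^ 2 * C ^ 2 / 6 := by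
  rw [ge_iff_le, dr_vec3, radial_sq_eq hz]
  have hgain : ω ^ 2 * C ^ 2 < 2 * z := (div_lt_one (by positivity)).mp h1
  have herror := mul_lt_mul_of_pos_left (abs_lt.mp h2).1 hz
  exact add_div_six_le_sqrt (by positivity) (by linarith) (by linarith)

theorem stmt_5 (z C ω e₁ e₂ e₃ : ℝ) (hz : 0 < z) (hC : 0 < C) (hω : 0 < ω)
    (h1 : ω ^ 2 * C ^ 2 / (2 * z) < 1)
    (h2 : |2 * C * e₁ / Real.sqrt z + 2 * C ^ 2 * ω * e₂ / z +
      C ^ 2 * (e₁ ^ 2 + e₂ ^ 2) / z ^ 2| < ω ^ 2 * C ^ 2 / 2) :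
    dr (vec3 (z + C * e₁ / Real.sqrt z) ((C * e₂ + C * ω * z) / Real.sqrt z)
        (C * e₃ / Real.sqrt z)) ≥ z + ω ^ 2 * C ^ 2 / 6 :=
  stmt_5_general z C ω e₁ e₂ e₃ hz h1 h2
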